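/- HXPath= is not compact over the class of tree models: there exists a set Γ of HXPath= node expressions such that every finite subset of Γ is satisfiable in some pointed tree model, but Γ itself is not satisfiable in any pointed tree model. -/

import Mathlib

mutual
inductive PExp (P N M E : Type) : Type
  | mod : M → PExp P N M E
  | at_ : N → PExp P N M E
  | test : NExp P N M E → PExp P N M E
  | comp : PExp P N M E → PExp P N M E → PExp P N M E
inductive NExp (P N M E : Type) : Type
  | prop : P → NExp P N M E
  | nom : N → NExp P N M E
  | neg : NExp P N M E → NExp P N M E
  | conj : NExp P N M E → NExp P N M E → NExp P N M E
  | cmpEq : E → PExp P N M E → PExp P N M E → NExp P N M E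
  | cmpNeq : E → PExp P N M E → PExp P N M E → NExp P N M E
end

/-- An abstract hybrid data model (the requirement that each `sim e` is an
equivalence relation is stated as a separate hypothesis where needed). -/
structure Model (P N M E : Type) where
  W : Type
  sim : E → W → W → Prop
  R : M → W → W → Prop
  V : W → P → Prop
  nom : N → W

mutual
def psat {P N M E : Type} (𝔐 : Model P N M E) : PExp P N M E → 𝔐.W → 𝔐.W → Prop
  | .mod a, m, n => 𝔐.R a m n
  | .at_ i, _, n => 𝔐.nom i = n
  | .test φ, m, n => m = n ∧ nsat 𝔐 φ m
  | .comp α β, m, n => ∃ l, psat 𝔐 α m l ∧ psat 𝔐 β l n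
def nsat {P N M E : Type} (𝔐 : Model P N M E) : NExp P N M E → 𝔐.W → Prop
  | .prop p, m => 𝔐.V m p
  | .nom i, m => 𝔐.nom i = m
  | .neg φ, m => ¬ nsat 𝔐 φ m
  | .conj φ ψ, m => nsat 𝔐 φ m ∧ nsat 𝔐 ψ m
  | .cmpEq e α β, m => ∃ n l, psat 𝔐 α m n ∧ psat 𝔐 β m l ∧ 𝔐.sim e n l
  | .cmpNeq e α β, m => ∃ n l, psat 𝔐 α m n ∧ psat 𝔐 β m l ∧ ¬ 𝔐.sim e n l
end

variable {P N M E : Type}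

/-- `⊤` defined from a given node expression: `¬(φ ∧ ¬φ)`. -/
def NExp.top (φ : NExp P N M E) : NExp P N M E := .neg (.conj φ (.neg φ))
/-- `ε := [⊤]`. -/
def PExp.eps (φ : NExp P N M E) : PExp P N M E := .test (NExp.top φ)
/-- `⟨α⟩φ := ⟨α[φ] =_e α[φ]⟩`. -/
def NExp.dia (e : E) (α : PExp P N M E) (φ : NExp P N M E) : NExp P N M E :=
  .cmpEq e (α.comp (.test φ)) (α.comp (.test φ))
/-- `[α]φ := ¬⟨α⟩¬φ`. -/
def NExp.box (e : E) (α : PExp P N M E) (φ : NExp P N M E) : NExp P N M E :=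
  .neg (NExp.dia e α (.neg φ))
/-- `@_i φ := ⟨@_i⟩φ`. -/
def NExp.atf (e : E) (i : N) (φ : NExp P N M E) : NExp P N M E := NExp.dia e (.at_ i) φ
def NExp.impl (φ ψ : NExp P N M E) : NExp P N M E := .neg (.conj φ (.neg ψ))
def NExp.iffN (φ ψ : NExp P N M E) : NExp P N M E := .conj (φ.impl ψ) (ψ.impl φ)

/-- A (pointed-free) tree model: mono-modal abstract hybrid data model whose
accessibility relation forms a tree (unique root without predecessors, every node
reachable from the root, unique predecessors, no cycles). -/
def IsTree (𝔐 : Model P N Unit Unit) : Prop :=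
  (∀ e, Equivalence (𝔐.sim e)) ∧
  ∃ r : 𝔐.W,
    (∀ x, ¬ 𝔐.R () x r) ∧
    (∀ x, (∀ y, ¬ 𝔐.R () y x) → x = r) ∧
    (∀ n, Relation.ReflTransGen (𝔐.R ()) r n) ∧
    (∀ n l l', 𝔐.R () l n → 𝔐.R () l' n → l = l') ∧
    (∀ n, ¬ Relation.TransGen (𝔐.R ()) n n)

/-! A rooted relation with unique predecessors is well-founded, so in a tree model no
sequence of nominals can name an infinite `R`-descending chain; yet this is what the formulas
`@_{n+1} ⟨a⟩ n` (`n ∈ ℕ`) jointly demand. Finitely many of them, with indices at most `K`, hold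
on the successor chain of `ℕ` once nominal `i` names the node `K + 1 - i`. -/

theorem WellFounded.of_rooted_of_pred_unique {W : Type} {R : W → W → Prop} {r : W}
    (hroot : ∀ x, ¬ R x r) (hreach : ∀ n, Relation.ReflTransGen R r n)
    (huniq : ∀ n l l', R l n → R l' n → l = l') : WellFounded R := by
  refine ⟨fun z => ?_⟩
  induction hreach z with
  | refl => exact ⟨r, fun x hx => (hroot x hx).elim⟩
  | tail _ hab ih => exact ⟨_, fun y hy => huniq _ _ _ hy hab ▸ ih⟩

section Semantics

variable {𝔐 : Model P N M E} {e : E}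

theorem psat_comp_test_iff (α : PExp P N M E) (φ : NExp P N M E) (m n : 𝔐.W) :
    psat 𝔐 (α.comp (.test φ)) m n ↔ psat 𝔐 α m n ∧ nsat 𝔐 φ n := by
  simp only [psat]
  exact ⟨fun ⟨_, hα, rfl, hφ⟩ => ⟨hα, hφ⟩, fun ⟨hα, hφ⟩ => ⟨n, hα, rfl, hφ⟩⟩

theorem nsat_dia_iff (hrefl : ∀ w, 𝔐.sim e w w) (α : PExp P N M E) (φ : NExp P N M E)
    (m : 𝔐.W) :
    nsat 𝔐 (NExp.dia e α φ) m ↔ ∃ n, psat 𝔐 α m n ∧ nsat 𝔐 φ n := by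
  simp only [NExp.dia, nsat, psat_comp_test_iff]
  constructor
  · rintro ⟨n, -, hn, -, -⟩
    exact ⟨n, hn⟩
  · rintro ⟨n, hn⟩
    exact ⟨n, n, hn, hn, hrefl n⟩

theorem nsat_atf_iff (hrefl : ∀ w, 𝔐.sim e w w) (i : N) (φ : NExp P N M E) (m : 𝔐.W) :
    nsat 𝔐 (NExp.atf e i φ) m ↔ nsat 𝔐 φ (𝔐.nom i) := by
  simp only [NExp.atf, nsat_dia_iff hrefl, psat, exists_eq_left']

end Semantics

def chainLink (n : ℕ) : NExp ℕ ℕ Unit Unit :=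
  NExp.atf () (n + 1) (NExp.dia () (.mod ()) (.nom n))

theorem chainLink_injective : Function.Injective chainLink := by
  intro a b h
  simp only [chainLink, NExp.atf, NExp.dia, NExp.cmpEq.injEq, PExp.comp.injEq,
    PExp.at_.injEq] at h
  omega

theorem nsat_chainLink_iff {𝔐 : Model ℕ ℕ Unit Unit} (hrefl : ∀ w, 𝔐.sim () w w)
    (n : ℕ) (m : 𝔐.W) :
    nsat 𝔐 (chainLink n) m ↔ 𝔐.R () (𝔐.nom (n + 1)) (𝔐.nom n) := by
  simp only [chainLink, nsat_atf_iff hrefl, nsat_dia_iff hrefl, psat, nsat, exists_eq_right']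

def succModel (nom : ℕ → ℕ) : Model ℕ ℕ Unit Unit where
  W := ℕ
  sim _ := Eq
  R _ m n := n = m + 1
  V _ _ := False
  nom := nom

theorem succModel_isTree (nom : ℕ → ℕ) : IsTree (succModel nom) := by
  refine ⟨fun _ => eq_equivalence, (0 : ℕ), fun (x : ℕ) h => ?_, fun (x : ℕ) h => ?_,
    fun (n : ℕ) => ?_, fun (n l l' : ℕ) (h : n = l + 1) (h' : n = l' + 1) => ?_,
    fun (n : ℕ) h => ?_⟩
  · exact Nat.succ_ne_zero x h.symm
  · cases x with
    | zero => rfl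
    | succ m => exact (h m rfl).elim
  · induction n with
    | zero => exact .refl
    | succ m ih => exact ih.tail rfl
  · exact Nat.succ_injective (h.symm.trans h')
  · have hlt : ∀ a b : ℕ, Relation.TransGen ((succModel nom).R ()) a b → a < b := by
      intro a b hab
      induction hab with
      | single h => exact h ▸ Nat.lt_succ_self _
      | tail _ h ih => exact h ▸ Nat.lt_succ_of_lt ih
    exact lt_irrefl n (hlt n n h)

/-- HXPath= is not compact over the class of tree models: there is a set of node
expressions every finite subset of which is satisfiable in a pointed tree model,
while the whole set is not. -/
theorem hxpath_not_compact_over_trees :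
    ∃ Γ : Set (NExp ℕ ℕ Unit Unit),
      (∀ Γ' ⊆ Γ, Γ'.Finite →
        ∃ (𝔐 : Model ℕ ℕ Unit Unit) (m : 𝔐.W), IsTree 𝔐 ∧ ∀ φ ∈ Γ', nsat 𝔐 φ m) ∧
      ¬ ∃ (𝔐 : Model ℕ ℕ Unit Unit) (m : 𝔐.W), IsTree 𝔐 ∧ ∀ φ ∈ Γ, nsat 𝔐 φ m := by
  refine ⟨Set.range chainLink, fun Γ' hsub hfin => ?_, ?_⟩
  · obtain ⟨K, hK⟩ := (hfin.preimage chainLink_injective.injOn).bddAbove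
    refine ⟨succModel (fun i => K + 1 - i), (0 : ℕ), succModel_isTree _, ?_⟩
    rintro _ hφ
    obtain ⟨n, rfl⟩ := hsub hφ
    have hn : n ≤ K := hK hφ
    refine (nsat_chainLink_iff (fun _ => rfl) n _).mpr ?_
    change K + 1 - n = K + 1 - (n + 1) + 1
    omega
  · rintro ⟨𝔐, m, ⟨hsim, r, hroot, -, hreach, huniq, -⟩, hsat⟩
    have hwf := WellFounded.of_rooted_of_pred_unique hroot hreach huniq
    exact (wellFounded_iff_isEmpty_descending_chain.mp hwf).false
      ⟨𝔐.nom, fun n => (nsat_chainLink_iff (hsim ()).refl n m).mp (hsat _ ⟨n, rfl⟩)⟩
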